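/- Let w be a finite word of length n ≥ 2. For y ∈ X let ŵ_y be the longest bifix of w[1,n−1]y with length n_y, and suppose x maximizes n_y. Then for every y ∈ X with y ≠ x, ŵ_y is also the longest bifix of the word w[1, n_x−1]y. -/

import Mathlib

open MeasureTheory ENNReal

/-- `w` occurs as a factor (contiguous subword) of the infinite word `ξ`. -/
def occursIn {r : ℕ} (w : List (Fin r)) (ξ : ℕ → Fin r) : Prop :=
  ∃ i : ℕ, ∀ j : ℕ, (hj : j < w.length) → ξ (i + j) = w.get ⟨j, hj⟩

/-- The waiting time `T_w(ξ)`: the first time `k` at which `w` has just occurred,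
i.e. `ξ[k-|w|+1, k] = w` (0-indexed: positions `k-|w|, …, k-1`); `∞` if `w` never occurs. -/
noncomputable def waitTime {r : ℕ} (w : List (Fin r)) (ξ : ℕ → Fin r) : ℝ≥0∞ :=
  sInf {t : ℝ≥0∞ | ∃ k : ℕ, t = k ∧ w.length ≤ k ∧
    ∀ j : ℕ, (hj : j < w.length) → ξ (k - w.length + j) = w.get ⟨j, hj⟩}

/-- Expected waiting time `E(w)`. -/
noncomputable def Ew {r : ℕ} (μ : Measure (ℕ → Fin r)) (w : List (Fin r)) : ℝ≥0∞ :=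
  ∫⁻ ξ, waitTime w ξ ∂μ

/-- The infinite word `w'ξ` obtained by prepending the finite word `w'` to `ξ`. -/
def prepend {r : ℕ} (w' : List (Fin r)) (ξ : ℕ → Fin r) : ℕ → Fin r :=
  fun n => if h : n < w'.length then w'.get ⟨n, h⟩ else ξ (n - w'.length)

/-- Conditional expected waiting time `E(u | w') = E[T_u(w'X)] − |w'|`. -/
noncomputable def condEw {r : ℕ} (μ : Measure (ℕ → Fin r)) (u w' : List (Fin r)) : ℝ≥0∞ :=
  (∫⁻ ξ, waitTime u (prepend w' ξ) ∂μ) - w'.length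

/-- `p(w) = ∏ᵢ p(w(i))`. -/
noncomputable def pword {r : ℕ} (p : Fin r → ℝ≥0∞) (w : List (Fin r)) : ℝ≥0∞ := (w.map p).prod

/-- `v` is a bifix of `w`: `v ≠ w` and `v` is both a prefix and a suffix of `w`. -/
def IsBifix {r : ℕ} (v w : List (Fin r)) : Prop := v ≠ w ∧ v <+: w ∧ v <:+ w

/-- `v` is the longest bifix of `w`. -/
def IsLongestBifix {r : ℕ} (v w : List (Fin r)) : Prop :=
  IsBifix v w ∧ ∀ v', IsBifix v' w → v'.length ≤ v.length

/-!
Write `u = w[1, n-1]`. A bifix `v` of `u y` is a prefix of `u`, and if nonempty it is `t y` with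
`t` a suffix of `u`. Hence, for a word `p` that is both a prefix and a suffix of `u`, the bifixes
of `p y` are exactly the bifixes of `u y` of length at most `|p|`. Take `p = ŵ_x[1, n_x - 1]`.
Two nonempty bifixes of `u x` and `u y` of the same length are the same prefix of `u`, so they
end in the same letter; for `y ≠ x` this forces `n_y < n_x`, i.e. `|ŵ_y| ≤ |p|`, and `ŵ_y` stays
longest among the bifixes of `p y`.
-/

lemma List.IsSuffix.concat {α : Type*} {l₁ l₂ : List α} (h : l₁ <:+ l₂) (a : α) :
    l₁ ++ [a] <:+ l₂ ++ [a] := by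
  obtain ⟨t, rfl⟩ := h
  exact ⟨t, (List.append_assoc _ _ _).symm⟩

namespace IsBifix

variable {r : ℕ} {u v w : List (Fin r)} {x y : Fin r}

lemma length_lt (h : IsBifix v w) : v.length < w.length :=
  lt_of_le_of_ne h.2.1.length_le fun hl => h.1 (h.2.1.eq_of_length hl)

lemma prefix_of_concat (h : IsBifix v (u ++ [y])) : v <+: u :=
  (List.prefix_concat_iff.1 h.2.1).resolve_left h.1

lemma dropLast_suffix_of_concat (h : IsBifix v (u ++ [y])) : v.dropLast <:+ u := by
  rcases List.suffix_concat_iff.1 h.2.2 with rfl | ⟨t, rfl, ht⟩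
  · exact List.nil_suffix
  · rwa [List.dropLast_concat]

lemma getLast?_eq_of_concat (h : IsBifix v (u ++ [y])) (hv : v ≠ []) : v.getLast? = some y := by
  rcases List.suffix_concat_iff.1 h.2.2 with rfl | ⟨t, rfl, -⟩
  · exact absurd rfl hv
  · exact List.getLast?_concat

lemma length_ne_of_concat {v' : List (Fin r)} (h : IsBifix v (u ++ [y]))
    (h' : IsBifix v' (u ++ [x])) (hyx : y ≠ x) (hv : v ≠ []) : v.length ≠ v'.length := by
  intro hlen
  have hvv' : v = v' :=
    (List.prefix_of_prefix_length_le h.prefix_of_concat h'.prefix_of_concat hlen.le).eq_of_length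
      hlen
  have hlast := h.getLast?_eq_of_concat hv
  rw [hvv', h'.getLast?_eq_of_concat (hvv' ▸ hv)] at hlast
  exact hyx (Option.some.inj hlast).symm

end IsBifix

lemma isBifix_concat_iff {r : ℕ} {u p v : List (Fin r)} {y : Fin r} (hpre : p <+: u)
    (hsuf : p <:+ u) : IsBifix v (p ++ [y]) ↔ v.length ≤ p.length ∧ IsBifix v (u ++ [y]) := by
  have hpu := hpre.length_le
  constructor
  · intro hv
    have hvp := hv.length_lt
    simp only [List.length_append, List.length_singleton] at hvp
    refine ⟨by omega, ne_of_apply_ne List.length ?_, ?_, ?_⟩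
    · simp only [List.length_append, List.length_singleton]
      omega
    · exact (hv.prefix_of_concat.trans hpre).trans (List.prefix_append _ _)
    · exact hv.2.2.trans (hsuf.concat y)
  · rintro ⟨hvp, hv⟩
    refine ⟨ne_of_apply_ne List.length ?_, ?_, ?_⟩
    · simp only [List.length_append, List.length_singleton]
      omega
    · exact (List.prefix_of_prefix_length_le hv.prefix_of_concat hpre hvp).trans
        (List.prefix_append _ _)
    · rcases List.suffix_concat_iff.1 hv.2.2 with rfl | ⟨t, rfl, ht⟩
      · exact List.nil_suffix
      · refine (List.suffix_of_suffix_length_le ht hsuf ?_).concat y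
        simp only [List.length_append, List.length_singleton] at hvp
        omega

lemma IsLongestBifix.dropLast_concat {r : ℕ} {u vx vy : List (Fin r)} {x y : Fin r}
    (hx : IsLongestBifix vx (u ++ [x])) (hy : IsLongestBifix vy (u ++ [y]))
    (hle : vy.length ≤ vx.length) (hyx : y ≠ x) : IsLongestBifix vy (vx.dropLast ++ [y]) := by
  have hpre : vx.dropLast <+: u := (List.dropLast_prefix vx).trans hx.1.prefix_of_concat
  have hsuf : vx.dropLast <:+ u := hx.1.dropLast_suffix_of_concat
  have hlen : vy.length ≤ vx.dropLast.length := by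
    rw [List.length_dropLast]
    rcases eq_or_ne vy [] with rfl | hvy
    · exact Nat.zero_le _
    · have := hy.1.length_ne_of_concat hx.1 hyx hvy
      omega
  exact ⟨(isBifix_concat_iff hpre hsuf).2 ⟨hlen, hy.1⟩,
    fun v hv => hy.2 v ((isBifix_concat_iff hpre hsuf).1 hv).2⟩

theorem statement_9_general {r : ℕ}
    (w : List (Fin r)) (wHat : Fin r → List (Fin r))
    (hwHat : ∀ y, IsLongestBifix (wHat y) (w.dropLast ++ [y])) (x : Fin r)
    (hx : ∀ y, (wHat y).length ≤ (wHat x).length) :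
    ∀ y, y ≠ x → IsLongestBifix (wHat y) (w.take ((wHat x).length - 1) ++ [y]) := by
  intro y hyx
  have hprefix : wHat x <+: w := (hwHat x).1.prefix_of_concat.trans (List.dropLast_prefix w)
  have htake : w.take ((wHat x).length - 1) = (wHat x).dropLast := by
    rw [List.dropLast_eq_take, List.prefix_iff_eq_take.1 hprefix, List.take_take, List.length_take]
    congr 1
    omega
  rw [htake]
  exact (hwHat x).dropLast_concat (hwHat y) (hx y) hyx

theorem statement_9 {r : ℕ} (hr : 2 ≤ r)
    (w : List (Fin r)) (hw : 2 ≤ w.length) (wHat : Fin r → List (Fin r))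
    (hwHat : ∀ y, IsLongestBifix (wHat y) (w.dropLast ++ [y])) (x : Fin r)
    (hx : ∀ y, (wHat y).length ≤ (wHat x).length) :
    ∀ y, y ≠ x → IsLongestBifix (wHat y) (w.take ((wHat x).length - 1) ++ [y]) :=
  statement_9_general w wHat hwHat x hx
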